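/- Let ς:H⊗H→A be a k-linear map such that ρ and ς satisfy conditions (2), (4), (11) and (17)–(22). Then for every k ∈ H^L ∪ H^R, every h ∈ H and every a ∈ A one has k·(h·a) = kh·a. -/

import Mathlib

open scoped TensorProduct

/-- The data of a weak bialgebra structure (together with an antipode and its
inverse) on a `k`-algebra `H`: a comultiplication `Δ`, a counit `ε`, an
antipode `S` and its inverse `Sinv`. -/
structure WeakHopfData (k H : Type*) [Field k] [Ring H] [Algebra k H] where
  Δ : H →ₗ[k] H ⊗[k] H
  ε : H →ₗ[k] k
  S : H →ₗ[k] H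
  Sinv : H →ₗ[k] H

section

variable {k H A : Type*} [Field k] [Ring H] [Algebra k H] [Ring A] [Algebra k A]

/-- `Π^L(h) = ε(1⁽¹⁾h)1⁽²⁾`. -/
noncomputable def piL (W : WeakHopfData k H) (h : H) : H :=
  (TensorProduct.lid k H) ((LinearMap.rTensor H (W.ε ∘ₗ LinearMap.mulRight k h)) (W.Δ 1))

/-- `Π^R(h) = 1⁽¹⁾ε(h1⁽²⁾)`. -/
noncomputable def piR (W : WeakHopfData k H) (h : H) : H :=
  (TensorProduct.rid k H) ((LinearMap.lTensor H (W.ε ∘ₗ LinearMap.mulLeft k h)) (W.Δ 1))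

/-- `H^L = im(Π^L)`. -/
def HL (W : WeakHopfData k H) : Set H := Set.range (piL W)

/-- `H^R = im(Π^R)`. -/
def HR (W : WeakHopfData k H) : Set H := Set.range (piR W)

/-- The axioms of a weak Hopf algebra with bijective antipode, where Sweedler
sums are expressed via arbitrary finite representations of the comultiplication. -/
structure IsWeakHopf (W : WeakHopfData k H) : Prop where
  coassoc : ∀ h : H,
    (TensorProduct.assoc k H H H) ((LinearMap.rTensor H W.Δ) (W.Δ h)) =
      (LinearMap.lTensor H W.Δ) (W.Δ h)
  counit_left : ∀ h : H, (TensorProduct.lid k H) ((LinearMap.rTensor H W.ε) (W.Δ h)) = h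
  counit_right : ∀ h : H, (TensorProduct.rid k H) ((LinearMap.lTensor H W.ε) (W.Δ h)) = h
  comul_mul : ∀ h l : H, W.Δ (h * l) = W.Δ h * W.Δ l
  weak_comul_one₁ : (LinearMap.lTensor H W.Δ) (W.Δ 1) =
    (TensorProduct.assoc k H H H) (W.Δ 1 ⊗ₜ[k] (1 : H)) * ((1 : H) ⊗ₜ[k] W.Δ 1)
  weak_comul_one₂ : (LinearMap.lTensor H W.Δ) (W.Δ 1) =
    ((1 : H) ⊗ₜ[k] W.Δ 1) * (TensorProduct.assoc k H H H) (W.Δ 1 ⊗ₜ[k] (1 : H))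
  weak_counit : ∀ h l m : H, ∀ (n : ℕ) (x y : Fin n → H),
    W.Δ l = ∑ i, x i ⊗ₜ[k] y i →
      W.ε (h * l * m) = ∑ i, W.ε (h * x i) * W.ε (y i * m) ∧
      W.ε (h * l * m) = ∑ i, W.ε (h * y i) * W.ε (x i * m)
  antipode_left : ∀ h : H, ∀ (n : ℕ) (x y : Fin n → H),
    W.Δ h = ∑ i, x i ⊗ₜ[k] y i → ∑ i, x i * W.S (y i) = piL W h
  antipode_right : ∀ h : H, ∀ (n : ℕ) (x y : Fin n → H),
    W.Δ h = ∑ i, x i ⊗ₜ[k] y i → ∑ i, W.S (x i) * y i = piR W h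
  antipode_mid : ∀ h : H, ∀ (n : ℕ) (x y : Fin n → H),
    W.Δ h = ∑ i, x i ⊗ₜ[k] y i →
      ∀ (m : Fin n → ℕ) (u v : (i : Fin n) → Fin (m i) → H),
        (∀ i, W.Δ (y i) = ∑ j, u i j ⊗ₜ[k] v i j) →
          ∑ i, ∑ j, W.S (x i) * u i j * W.S (v i j) = W.S h
  S_Sinv : ∀ h : H, W.S (W.Sinv h) = h
  Sinv_S : ∀ h : H, W.Sinv (W.S h) = h

/-- Condition (1): `h·1_A = Π^L(h)·1_A`. -/
def cond1 (W : WeakHopfData k H) (ρ : H →ₗ[k] A →ₗ[k] A) : Prop :=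
  ∀ h : H, ρ h 1 = ρ (piL W h) 1

/-- Condition (2): `h·(aa') = (h⁽¹⁾·a)(h⁽²⁾·a')`. -/
def cond2 (W : WeakHopfData k H) (ρ : H →ₗ[k] A →ₗ[k] A) : Prop :=
  ∀ (h : H) (a a' : A) (n : ℕ) (x y : Fin n → H),
    W.Δ h = ∑ i, x i ⊗ₜ[k] y i → ρ h (a * a') = ∑ i, ρ (x i) a * ρ (y i) a'

/-- Condition (3): `S⁻¹(l)h·a = (h·a)(l·1_A)` and `lh·a = (l·1_A)(h·a)` for `l ∈ H^L`. -/
def cond3 (W : WeakHopfData k H) (ρ : H →ₗ[k] A →ₗ[k] A) : Prop :=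
  ∀ (h : H) (a : A), ∀ l ∈ HL W,
    ρ (W.Sinv l * h) a = ρ h a * ρ l 1 ∧ ρ (l * h) a = ρ l 1 * ρ h a

/-- Condition (4): `1·a = a`. -/
def cond4 (ρ : H →ₗ[k] A →ₗ[k] A) : Prop := ∀ a : A, ρ 1 a = a

/-- Condition (5). -/
def cond5 (W : WeakHopfData k H) (ρ : H →ₗ[k] A →ₗ[k] A) (σ : H → H → A) : Prop :=
  ∀ (h g : H), ∀ l ∈ HL W,
    σ (l * h) g = ρ l 1 * σ h g ∧ σ (W.Sinv l * h) g = σ h g * ρ l 1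

/-- Condition (6): `(h⁽¹⁾·(l·1_A))σ(h⁽²⁾,k) = σ(h,lk)` for `l ∈ H^L`. -/
def cond6 (W : WeakHopfData k H) (ρ : H →ₗ[k] A →ₗ[k] A) (σ : H → H → A) : Prop :=
  ∀ (h g : H), ∀ l ∈ HL W, ∀ (n : ℕ) (x y : Fin n → H),
    W.Δ h = ∑ i, x i ⊗ₜ[k] y i →
      ∑ i, ρ (x i) (ρ l 1) * σ (y i) g = σ h (l * g)

/-- Condition (7): `σ(1,h) = σ(h,1) = h·1_A`. -/
def cond7 (ρ : H →ₗ[k] A →ₗ[k] A) (σ : H → H → A) : Prop :=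
  ∀ h : H, σ 1 h = ρ h 1 ∧ σ h 1 = ρ h 1

/-- Condition (8), the cocycle condition. -/
def cond8 (W : WeakHopfData k H) (ρ : H →ₗ[k] A →ₗ[k] A) (σ : H → H → A) : Prop :=
  ∀ (h g m : H) (n₁ : ℕ) (x₁ y₁ : Fin n₁ → H) (n₂ : ℕ) (x₂ y₂ : Fin n₂ → H)
    (n₃ : ℕ) (x₃ y₃ : Fin n₃ → H),
    W.Δ h = ∑ i, x₁ i ⊗ₜ[k] y₁ i → W.Δ g = ∑ i, x₂ i ⊗ₜ[k] y₂ i →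
    W.Δ m = ∑ i, x₃ i ⊗ₜ[k] y₃ i →
      ∑ i, ∑ j, ∑ p, ρ (x₁ i) (σ (x₂ j) (x₃ p)) * σ (y₁ i) (y₂ j * y₃ p) =
        ∑ i, ∑ j, σ (x₁ i) (x₂ j) * σ (y₁ i * y₂ j) m

/-- Condition (9), the twisted module condition. -/
def cond9 (W : WeakHopfData k H) (ρ : H →ₗ[k] A →ₗ[k] A) (σ : H → H → A) : Prop :=
  ∀ (h g : H) (a : A) (n : ℕ) (x y : Fin n → H) (m : ℕ) (u v : Fin m → H),
    W.Δ h = ∑ i, x i ⊗ₜ[k] y i → W.Δ g = ∑ j, u j ⊗ₜ[k] v j →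
      ∑ i, ∑ j, ρ (x i) (ρ (u j) a) * σ (y i) (v j) =
        ∑ i, ∑ j, σ (x i) (u j) * ρ (y i * v j) a

/-- Condition (10): `h·(l·1_A) = hl·1_A` for `l ∈ H^L`. -/
def cond10 (W : WeakHopfData k H) (ρ : H →ₗ[k] A →ₗ[k] A) : Prop :=
  ∀ h : H, ∀ l ∈ HL W, ρ h (ρ l 1) = ρ (h * l) 1

/-- Condition (11): `h·(l·1_A) = hl·1_A` for all `h, l ∈ H`. -/
def cond11 (ρ : H →ₗ[k] A →ₗ[k] A) : Prop :=
  ∀ h l : H, ρ h (ρ l 1) = ρ (h * l) 1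

/-- Condition (12): `σ(h,l) = σ(hl,1)` for `l ∈ H^L`. -/
def cond12 (W : WeakHopfData k H) (σ : H → H → A) : Prop :=
  ∀ h : H, ∀ l ∈ HL W, σ h l = σ (h * l) 1

/-- Condition (13). -/
def cond13 (W : WeakHopfData k H) (ρ : H →ₗ[k] A →ₗ[k] A) (σbar : H → H → A) : Prop :=
  ∀ (h g : H) (n : ℕ) (x y : Fin n → H) (m : ℕ) (u v : Fin m → H),
    W.Δ h = ∑ i, x i ⊗ₜ[k] y i → W.Δ g = ∑ j, u j ⊗ₜ[k] v j →
      σbar h g = ∑ i, ∑ j, ρ (x i * u j) 1 * σbar (y i) (v j)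

/-- Condition (14). -/
def cond14 (W : WeakHopfData k H) (ρ : H →ₗ[k] A →ₗ[k] A) (σbar : H → H → A) : Prop :=
  ∀ (h g : H), ∀ l ∈ HL W,
    σbar (l * h) g = ρ l 1 * σbar h g ∧ σbar (W.Sinv l * h) g = σbar h g * ρ l 1

/-- Condition (15). -/
def cond15 (W : WeakHopfData k H) (ρ : H →ₗ[k] A →ₗ[k] A) (σbar : H → H → A) : Prop :=
  ∀ (h g : H), ∀ l ∈ HL W, ∀ (n : ℕ) (x y : Fin n → H),
    W.Δ h = ∑ i, x i ⊗ₜ[k] y i →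
      ∑ i, σbar (x i) g * ρ (y i) (ρ l 1) = σbar h (W.Sinv l * g)

/-- Condition (16). -/
def cond16 (W : WeakHopfData k H) (ρ : H →ₗ[k] A →ₗ[k] A) (σ σbar : H → H → A) : Prop :=
  ∀ (h g : H) (n : ℕ) (x y : Fin n → H) (m : ℕ) (u v : Fin m → H),
    W.Δ h = ∑ i, x i ⊗ₜ[k] y i → W.Δ g = ∑ j, u j ⊗ₜ[k] v j →
      (∑ i, ∑ j, σ (x i) (u j) * σbar (y i) (v j) = ρ h (ρ g 1)) ∧
      (∑ i, ∑ j, σbar (x i) (u j) * σ (y i) (v j) = ρ (h * g) 1)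

/-- Condition (17), the cocycle condition for `ς : H ⊗ H → A`. -/
def cond17 (W : WeakHopfData k H) (ρ : H →ₗ[k] A →ₗ[k] A) (ς : H ⊗[k] H → A) : Prop :=
  ∀ (h g m : H) (n₁ : ℕ) (x₁ y₁ : Fin n₁ → H) (n₂ : ℕ) (x₂ y₂ : Fin n₂ → H)
    (n₃ : ℕ) (x₃ y₃ : Fin n₃ → H),
    W.Δ h = ∑ i, x₁ i ⊗ₜ[k] y₁ i → W.Δ g = ∑ i, x₂ i ⊗ₜ[k] y₂ i →
    W.Δ m = ∑ i, x₃ i ⊗ₜ[k] y₃ i →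
      ∑ i, ∑ j, ∑ p, ρ (x₁ i) (ς (x₂ j ⊗ₜ[k] x₃ p)) * ς (y₁ i ⊗ₜ[k] (y₂ j * y₃ p)) =
        ∑ i, ∑ j, ς (x₁ i ⊗ₜ[k] x₂ j) * ς ((y₁ i * y₂ j) ⊗ₜ[k] m)

/-- Condition (18), the twisted module condition for `ς : H ⊗ H → A`. -/
def cond18 (W : WeakHopfData k H) (ρ : H →ₗ[k] A →ₗ[k] A) (ς : H ⊗[k] H → A) : Prop :=
  ∀ (h g : H) (a : A) (n : ℕ) (x y : Fin n → H) (m : ℕ) (u v : Fin m → H),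
    W.Δ h = ∑ i, x i ⊗ₜ[k] y i → W.Δ g = ∑ j, u j ⊗ₜ[k] v j →
      ∑ i, ∑ j, ρ (x i) (ρ (u j) a) * ς (y i ⊗ₜ[k] v j) =
        ∑ i, ∑ j, ς (x i ⊗ₜ[k] u j) * ρ (y i * v j) a

/-- Condition (19). -/
def cond19 (W : WeakHopfData k H) (ρ : H →ₗ[k] A →ₗ[k] A) (ς : H ⊗[k] H → A) : Prop :=
  ∀ (h g : H) (n : ℕ) (x y : Fin n → H) (m : ℕ) (u v : Fin m → H),
    W.Δ h = ∑ i, x i ⊗ₜ[k] y i → W.Δ g = ∑ j, u j ⊗ₜ[k] v j →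
      ς (h ⊗ₜ[k] g) = ∑ i, ∑ j, ς (x i ⊗ₜ[k] u j) * ρ (y i * v j) 1

/-- Condition (20). -/
def cond20 (W : WeakHopfData k H) (ρ : H →ₗ[k] A →ₗ[k] A) (ς : H ⊗[k] H → A) : Prop :=
  ∀ (h : H) (n : ℕ) (x y : Fin n → H) (m : ℕ) (u v : Fin m → H),
    W.Δ h = ∑ i, x i ⊗ₜ[k] y i → W.Δ 1 = ∑ j, u j ⊗ₜ[k] v j →
      ρ h 1 = ∑ i, ∑ j, ρ (x i) (ρ (u j) 1) * ς (y i ⊗ₜ[k] v j)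

/-- Condition (21). -/
def cond21 (W : WeakHopfData k H) (ρ : H →ₗ[k] A →ₗ[k] A) (ς : H ⊗[k] H → A) : Prop :=
  ∀ (h : H) (m : ℕ) (u v : Fin m → H),
    W.Δ 1 = ∑ j, u j ⊗ₜ[k] v j →
      ρ h 1 = ∑ j, ρ (u j) 1 * ς (v j ⊗ₜ[k] h)

/-- Condition (22): `a(1⁽¹⁾·1_A) ⊗ 1⁽²⁾ = (1⁽¹⁾·a) ⊗ 1⁽²⁾` in `A ⊗ H`. -/
def cond22 (W : WeakHopfData k H) (ρ : H →ₗ[k] A →ₗ[k] A) : Prop :=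
  ∀ (a : A) (m : ℕ) (u v : Fin m → H),
    W.Δ 1 = ∑ j, u j ⊗ₜ[k] v j →
      (∑ j, (a * ρ (u j) 1) ⊗ₜ[k] v j) = ∑ j, (ρ (u j) a) ⊗ₜ[k] v j

/-- Condition (23). -/
def cond23 (W : WeakHopfData k H) (ρ : H →ₗ[k] A →ₗ[k] A) (ςbar : H ⊗[k] H → A) : Prop :=
  ∀ (h g : H) (n : ℕ) (x y : Fin n → H) (m : ℕ) (u v : Fin m → H),
    W.Δ h = ∑ i, x i ⊗ₜ[k] y i → W.Δ g = ∑ j, u j ⊗ₜ[k] v j →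
      ςbar (h ⊗ₜ[k] g) = ∑ i, ∑ j, ρ (x i * u j) 1 * ςbar (y i ⊗ₜ[k] v j)

/-- Condition (24). -/
def cond24 (W : WeakHopfData k H) (ρ : H →ₗ[k] A →ₗ[k] A) (ς ςbar : H ⊗[k] H → A) : Prop :=
  ∀ (h g : H) (n : ℕ) (x y : Fin n → H) (m : ℕ) (u v : Fin m → H),
    W.Δ h = ∑ i, x i ⊗ₜ[k] y i → W.Δ g = ∑ j, u j ⊗ₜ[k] v j →
      (∑ i, ∑ j, ς (x i ⊗ₜ[k] u j) * ςbar (y i ⊗ₜ[k] v j) = ρ (h * g) 1) ∧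
      (∑ i, ∑ j, ςbar (x i ⊗ₜ[k] u j) * ς (y i ⊗ₜ[k] v j) = ρ (h * g) 1)

/-- `σ` is `H^R`-balanced: `σ(hr,k) = σ(h,rk)` for `r ∈ H^R`. -/
def HRBalanced (W : WeakHopfData k H) (σ : H → H → A) : Prop :=
  ∀ (h g : H), ∀ r ∈ HR W, σ (h * r) g = σ h (r * g)

/-- `σbar` is `H^L`-balanced: `σbar(hl,k) = σbar(h,lk)` for `l ∈ H^L`. -/
def HLBalanced (W : WeakHopfData k H) (σbar : H → H → A) : Prop :=
  ∀ (h g : H), ∀ l ∈ HL W, σbar (h * l) g = σbar h (l * g)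

/-- The idempotent `∇ρ : A ⊗ H → A ⊗ H`, `a ⊗ h ↦ a(h⁽¹⁾·1_A) ⊗ h⁽²⁾`. -/
noncomputable def nabla (W : WeakHopfData k H) (ρ : H →ₗ[k] A →ₗ[k] A) :
    A ⊗[k] H →ₗ[k] A ⊗[k] H :=
  (LinearMap.rTensor H (LinearMap.mul' k A ∘ₗ LinearMap.lTensor A (ρ.flip 1))) ∘ₗ
    (TensorProduct.assoc k A H H).symm.toLinearMap ∘ₗ LinearMap.lTensor A W.Δ

/-- The subspace `N` of `A ⊗ H` spanned by the elements
`a(l·1_A) ⊗ h - a ⊗ lh` with `l ∈ H^L`, so that `(A ⊗ H)/N = A ⊗_{H^L} H`. -/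
def relN (W : WeakHopfData k H) (ρ : H →ₗ[k] A →ₗ[k] A) : Submodule k (A ⊗[k] H) :=
  Submodule.span k
    {z | ∃ (a : A) (l h : H), l ∈ HL W ∧ z = (a * ρ l 1) ⊗ₜ[k] h - a ⊗ₜ[k] (l * h)}

/-- The map `σ̃(h,k) := (h⁽¹⁾k⁽¹⁾·1_A)σ̄(h⁽²⁾,k⁽²⁾)`. -/
noncomputable def sigmaTilde (W : WeakHopfData k H) (ρ : H →ₗ[k] A →ₗ[k] A)
    (σbar : H →ₗ[k] H →ₗ[k] A) : H → H → A := fun h g =>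
  LinearMap.mul' k A
    ((TensorProduct.map ((ρ.flip 1) ∘ₗ LinearMap.mul' k H) (TensorProduct.lift σbar))
      ((TensorProduct.tensorTensorTensorComm k H H H H) (W.Δ h ⊗ₜ[k] W.Δ g)))

end


/-!
For `l ∈ H^L` and `r ∈ H^R` the weak comultiplicativity of `1` gives `Δ(lh) = (l ⊗ 1)Δ(h)` and
`Δ(rh) = (1 ⊗ r)Δ(h)`. Condition (22) shows that `l` and `r` act on `A` by multiplication with
`l·1_A` on the left and with `r·1_A` on the right: for `r = Π^R(m)` contract the `H`-leg of (22)
with `ε(m ·)`; for `l`, expand `l·(1_A b)` by (2) and move `l·1_A` across with (11) and (22).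
Expanding `lh·a = (l h⁽¹⁾·1_A)(h⁽²⁾·a)` and `rh·a = (h⁽¹⁾·a)(r h⁽²⁾·1_A)` by (2) and applying
(11) to the factor containing `l` or `r` finishes the proof.
-/

theorem TensorProduct.exists_eq_sum_fin_tmul {R M N : Type*} [CommSemiring R] [AddCommMonoid M]
    [Module R M] [AddCommMonoid N] [Module R N] (t : M ⊗[R] N) :
    ∃ (n : ℕ) (x : Fin n → M) (y : Fin n → N), t = ∑ i, x i ⊗ₜ[R] y i := by
  obtain ⟨S, rfl⟩ := TensorProduct.exists_finset t
  refine ⟨S.card, fun i => (S.equivFin.symm i).1.1, fun i => (S.equivFin.symm i).1.2, ?_⟩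
  rw [← Finset.sum_coe_sort S]
  exact (Equiv.sum_comp S.equivFin.symm fun p => p.1.1 ⊗ₜ[R] p.1.2).symm

open TensorProduct

section WeakHopf

variable {k H : Type*} [Field k] [Ring H] [Algebra k H] {W : WeakHopfData k H}

theorem piL_eq_sum {n : ℕ} {u v : Fin n → H} (h1 : W.Δ 1 = ∑ j, u j ⊗ₜ[k] v j) (m : H) :
    piL W m = ∑ j, W.ε (u j * m) • v j := by
  simp [piL, h1]

theorem piR_eq_sum {n : ℕ} {u v : Fin n → H} (h1 : W.Δ 1 = ∑ j, u j ⊗ₜ[k] v j) (m : H) :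
    piR W m = ∑ j, W.ε (m * v j) • u j := by
  simp [piR, h1]

namespace IsWeakHopf

theorem comul_piL_eq_mul_comul_one (hW : IsWeakHopf W) (m : H) :
    W.Δ (piL W m) = (piL W m ⊗ₜ[k] 1) * W.Δ 1 := by
  obtain ⟨n, u, v, h1⟩ := exists_eq_sum_fin_tmul (W.Δ 1)
  -- contract the first leg of the weak comultiplication axiom for `1` with `ε(- * m)`
  have key := congrArg (TensorProduct.lid k (H ⊗[k] H) ∘
    LinearMap.rTensor (H ⊗[k] H) (W.ε ∘ₗ LinearMap.mulRight k m)) hW.weak_comul_one₁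
  simp only [h1, Function.comp_apply, map_sum, LinearMap.lTensor_tmul, LinearMap.rTensor_tmul,
    sum_tmul, tmul_sum, Finset.sum_mul, Finset.mul_sum, assoc_tmul,
    Algebra.TensorProduct.tmul_mul_tmul, one_mul, mul_one, lid_tmul, LinearMap.coe_comp,
    LinearMap.mulRight_apply] at key
  rw [piL_eq_sum h1, map_sum]
  simp only [map_smul, key]
  rw [h1]
  simp only [sum_tmul, Finset.sum_mul, Finset.mul_sum, smul_tmul', smul_mul_assoc,
    Algebra.TensorProduct.tmul_mul_tmul, one_mul]

theorem comul_piL_eq_comul_one_mul (hW : IsWeakHopf W) (m : H) :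
    W.Δ (piL W m) = W.Δ 1 * (piL W m ⊗ₜ[k] 1) := by
  obtain ⟨n, u, v, h1⟩ := exists_eq_sum_fin_tmul (W.Δ 1)
  have key := congrArg (TensorProduct.lid k (H ⊗[k] H) ∘
    LinearMap.rTensor (H ⊗[k] H) (W.ε ∘ₗ LinearMap.mulRight k m)) hW.weak_comul_one₂
  simp only [h1, Function.comp_apply, map_sum, LinearMap.lTensor_tmul, LinearMap.rTensor_tmul,
    sum_tmul, tmul_sum, Finset.sum_mul, Finset.mul_sum, assoc_tmul,
    Algebra.TensorProduct.tmul_mul_tmul, one_mul, mul_one, lid_tmul, LinearMap.coe_comp,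
    LinearMap.mulRight_apply] at key
  rw [piL_eq_sum h1, map_sum]
  simp only [map_smul, key]
  rw [h1]
  simp only [sum_tmul, Finset.sum_mul, Finset.mul_sum, smul_tmul', mul_smul_comm,
    Algebra.TensorProduct.tmul_mul_tmul, mul_one]

theorem comul_piR (hW : IsWeakHopf W) (m : H) : W.Δ (piR W m) = (1 ⊗ₜ[k] piR W m) * W.Δ 1 := by
  obtain ⟨n, u, v, h1⟩ := exists_eq_sum_fin_tmul (W.Δ 1)
  have coassoc_one : LinearMap.rTensor H W.Δ (W.Δ 1) = (TensorProduct.assoc k H H H).symm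
      ((1 ⊗ₜ[k] W.Δ 1) * TensorProduct.assoc k H H H (W.Δ 1 ⊗ₜ[k] 1)) := by
    rw [← hW.weak_comul_one₂, ← hW.coassoc 1, LinearEquiv.symm_apply_apply]
  -- contract the last leg of `(Δ ⊗ id)Δ(1)` with `ε(m * -)`
  have key := congrArg (TensorProduct.rid k (H ⊗[k] H) ∘
    LinearMap.lTensor (H ⊗[k] H) (W.ε ∘ₗ LinearMap.mulLeft k m)) coassoc_one
  simp only [h1, Function.comp_apply, map_sum, LinearMap.lTensor_tmul, LinearMap.rTensor_tmul,
    sum_tmul, tmul_sum, Finset.sum_mul, Finset.mul_sum, assoc_tmul, assoc_symm_tmul,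
    Algebra.TensorProduct.tmul_mul_tmul, one_mul, mul_one, rid_tmul, LinearMap.coe_comp,
    LinearMap.mulLeft_apply] at key
  rw [piR_eq_sum h1, map_sum]
  simp only [map_smul, key]
  rw [h1]
  simp only [tmul_sum, Finset.sum_mul, Finset.mul_sum, tmul_smul, smul_mul_assoc,
    Algebra.TensorProduct.tmul_mul_tmul, one_mul]

theorem comul_mul_of_mem_HL (hW : IsWeakHopf W) {l : H} (hl : l ∈ HL W) (h : H) :
    W.Δ (l * h) = (l ⊗ₜ[k] 1) * W.Δ h := by
  obtain ⟨m, rfl⟩ := hl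
  rw [hW.comul_mul, hW.comul_piL_eq_mul_comul_one, mul_assoc, ← hW.comul_mul, one_mul]

theorem comul_mul_of_mem_HR (hW : IsWeakHopf W) {r : H} (hr : r ∈ HR W) (h : H) :
    W.Δ (r * h) = (1 ⊗ₜ[k] r) * W.Δ h := by
  obtain ⟨m, rfl⟩ := hr
  rw [hW.comul_mul, hW.comul_piR, mul_assoc, ← hW.comul_mul, one_mul]

end IsWeakHopf

end WeakHopf

section Action

variable {k H A : Type*} [Field k] [Ring H] [Algebra k H] [Ring A] [Algebra k A]
  {W : WeakHopfData k H} {ρ : H →ₗ[k] A →ₗ[k] A}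

theorem act_eq_sum_one_mul (h2 : cond2 W ρ) {h : H} {n : ℕ} {x y : Fin n → H}
    (hΔ : W.Δ h = ∑ i, x i ⊗ₜ[k] y i) (a : A) : ρ h a = ∑ i, ρ (x i) 1 * ρ (y i) a := by
  simpa using h2 h 1 a n x y hΔ

theorem act_eq_sum_mul_one (h2 : cond2 W ρ) {h : H} {n : ℕ} {x y : Fin n → H}
    (hΔ : W.Δ h = ∑ i, x i ⊗ₜ[k] y i) (a : A) : ρ h a = ∑ i, ρ (x i) a * ρ (y i) 1 := by
  simpa using h2 h a 1 n x y hΔ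

theorem act_eq_mul_act_one_of_mem_HR (h22 : cond22 W ρ) {r : H} (hr : r ∈ HR W) (b : A) :
    ρ r b = b * ρ r 1 := by
  obtain ⟨n, u, v, h1⟩ := exists_eq_sum_fin_tmul (W.Δ 1)
  obtain ⟨m, rfl⟩ := hr
  -- contract the `H`-leg of (22) with `ε(m * -)`
  have key := congrArg (TensorProduct.rid k A ∘ LinearMap.lTensor A (W.ε ∘ₗ LinearMap.mulLeft k m))
    (h22 b n u v h1)
  simp only [Function.comp_apply, map_sum, LinearMap.lTensor_tmul, rid_tmul, LinearMap.coe_comp,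
    LinearMap.mulLeft_apply] at key
  simp only [piR_eq_sum h1, map_sum, map_smul, LinearMap.sum_apply, LinearMap.smul_apply,
    ← key, Finset.mul_sum, mul_smul_comm]

theorem act_eq_act_one_mul_of_mem_HL (hW : IsWeakHopf W) (h2 : cond2 W ρ) (h4 : cond4 ρ)
    (h11 : cond11 ρ) (h22 : cond22 W ρ) {l : H} (hl : l ∈ HL W) (b : A) :
    ρ l b = ρ l 1 * b := by
  obtain ⟨n, u, v, h1⟩ := exists_eq_sum_fin_tmul (W.Δ 1)
  have hΔl : W.Δ l = ∑ j, (u j * l) ⊗ₜ[k] v j := by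
    obtain ⟨m, rfl⟩ := hl
    simp only [hW.comul_piL_eq_comul_one_mul, h1, Finset.sum_mul,
      Algebra.TensorProduct.tmul_mul_tmul, mul_one]
  -- (22) for `a = l·1_A`, pushed along `x ⊗ g ↦ x (g·b)`
  have key := congrArg (LinearMap.mul' k A ∘ LinearMap.lTensor A (ρ.flip b))
    (h22 (ρ l 1) n u v h1)
  simp only [Function.comp_apply, map_sum, LinearMap.lTensor_tmul, LinearMap.mul'_apply,
    LinearMap.flip_apply] at key
  calc ρ l b = ∑ j, ρ (u j * l) 1 * ρ (v j) b := act_eq_sum_one_mul h2 hΔl b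
    _ = ∑ j, ρ (u j) (ρ l 1) * ρ (v j) b := Finset.sum_congr rfl fun j _ => by rw [h11]
    _ = ∑ j, ρ l 1 * (ρ (u j) 1 * ρ (v j) b) := by simp only [← key, mul_assoc]
    _ = ρ l 1 * b := by rw [← Finset.mul_sum, ← act_eq_sum_one_mul h2 h1, h4]

theorem act_act_of_mem_HL (hW : IsWeakHopf W) (h2 : cond2 W ρ) (h4 : cond4 ρ)
    (h11 : cond11 ρ) (h22 : cond22 W ρ) {l : H} (hl : l ∈ HL W) (h : H) (a : A) :
    ρ l (ρ h a) = ρ (l * h) a := by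
  obtain ⟨n, x, y, hΔ⟩ := exists_eq_sum_fin_tmul (W.Δ h)
  have hΔl : W.Δ (l * h) = ∑ i, (l * x i) ⊗ₜ[k] y i := by
    simp only [hW.comul_mul_of_mem_HL hl, hΔ, Finset.mul_sum,
      Algebra.TensorProduct.tmul_mul_tmul, one_mul]
  have hl1 := act_eq_act_one_mul_of_mem_HL hW h2 h4 h11 h22 hl
  rw [hl1, act_eq_sum_one_mul h2 hΔ, act_eq_sum_one_mul h2 hΔl, Finset.mul_sum]
  refine Finset.sum_congr rfl fun i _ => ?_
  rw [← h11, hl1 (ρ (x i) 1), mul_assoc]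

theorem act_act_of_mem_HR (hW : IsWeakHopf W) (h2 : cond2 W ρ) (h11 : cond11 ρ)
    (h22 : cond22 W ρ) {r : H} (hr : r ∈ HR W) (h : H) (a : A) :
    ρ r (ρ h a) = ρ (r * h) a := by
  obtain ⟨n, x, y, hΔ⟩ := exists_eq_sum_fin_tmul (W.Δ h)
  have hΔr : W.Δ (r * h) = ∑ i, x i ⊗ₜ[k] (r * y i) := by
    simp only [hW.comul_mul_of_mem_HR hr, hΔ, Finset.mul_sum,
      Algebra.TensorProduct.tmul_mul_tmul, one_mul]
  have hr1 := act_eq_mul_act_one_of_mem_HR h22 hr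
  rw [hr1, act_eq_sum_mul_one h2 hΔ, act_eq_sum_mul_one h2 hΔr, Finset.sum_mul]
  refine Finset.sum_congr rfl fun i _ => ?_
  rw [← h11, hr1 (ρ (y i) 1), mul_assoc]

end Action

theorem statement9_general {k H A : Type*} [Field k] [Ring H] [Algebra k H] [Ring A] [Algebra k A]
    (W : WeakHopfData k H) (hW : IsWeakHopf W) (ρ : H →ₗ[k] A →ₗ[k] A)
    (h2 : cond2 W ρ) (h4 : cond4 ρ) (h11 : cond11 ρ) (h22 : cond22 W ρ) :
    ∀ g ∈ HL W ∪ HR W, ∀ (h : H) (a : A), ρ g (ρ h a) = ρ (g * h) a := by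
  rintro g (hg | hg) h a
  · exact act_act_of_mem_HL hW h2 h4 h11 h22 hg h a
  · exact act_act_of_mem_HR hW h2 h11 h22 hg h a

/-- under conditions (2), (4), (11) and (17)–(22), one has
`k·(h·a) = kh·a` for all `k ∈ H^L ∪ H^R`. -/
theorem statement9 {k H A : Type*} [Field k] [Ring H] [Algebra k H] [Ring A] [Algebra k A]
    (W : WeakHopfData k H) (hW : IsWeakHopf W) (ρ : H →ₗ[k] A →ₗ[k] A)
    (ς : H ⊗[k] H →ₗ[k] A)
    (h2 : cond2 W ρ) (h4 : cond4 ρ) (h11 : cond11 ρ)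
    (h17 : cond17 W ρ ⇑ς) (h18 : cond18 W ρ ⇑ς) (h19 : cond19 W ρ ⇑ς)
    (h20 : cond20 W ρ ⇑ς) (h21 : cond21 W ρ ⇑ς) (h22 : cond22 W ρ) :
    ∀ g ∈ HL W ∪ HR W, ∀ (h : H) (a : A), ρ g (ρ h a) = ρ (g * h) a :=
  statement9_general W hW ρ h2 h4 h11 h22
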